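/- There exists a constant c > 0 such that for all real ξ₁, ξ₂ with ξ₁ ≠ 0, ξ₂ ≠ 0 and ξ₁+ξ₂ ≠ 0, one has ((ξ₁+ξ₂)²coth(ξ₁+ξ₂) − ξ₁²coth(ξ₁) − ξ₂²coth(ξ₂)) / (ξ₁ξ₂(ξ₁+ξ₂)) ≥ c / (1 + max{|ξ₁|, |ξ₂|, |ξ₁+ξ₂|}). In particular this quotient is always strictly positive. -/

import Mathlib

/-- Hyperbolic cotangent. -/
noncomputable def coth (x : ℝ) : ℝ := Real.cosh x / Real.sinh x

set_option maxHeartbeats 1000000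

/-- `sinh x ≤ x * cosh x` for `x ≥ 0`. -/
lemma sinh_le_mul_cosh {x : ℝ} (hx : 0 ≤ x) : Real.sinh x ≤ x * Real.cosh x := by
  have h : ∀ y ∈ Set.Ici (0:ℝ), 0 ≤ deriv (fun t => t * Real.cosh t - Real.sinh t) y := by
    intro y hy
    have : deriv (fun t => t * Real.cosh t - Real.sinh t) y = y * Real.sinh y := by
      have h1 : HasDerivAt (fun t : ℝ => t * Real.cosh t - Real.sinh t)
          (1 * Real.cosh y + y * Real.sinh y - Real.cosh y) y :=
        ((hasDerivAt_id y).mul (Real.hasDerivAt_cosh y)).sub (Real.hasDerivAt_sinh y)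
      rw [h1.deriv]; ring
    rw [this]
    exact mul_nonneg hy (Real.sinh_nonneg_iff.mpr hy)
  have hmono : MonotoneOn (fun t => t * Real.cosh t - Real.sinh t) (Set.Ici (0:ℝ)) := by
    apply monotoneOn_of_deriv_nonneg (convex_Ici 0)
    · exact ((continuous_id.mul Real.continuous_cosh).sub Real.continuous_sinh).continuousOn
    · intro y hy
      exact (((differentiableAt_id.mul Real.differentiable_cosh.differentiableAt).sub
        Real.differentiable_sinh.differentiableAt)).differentiableWithinAt
    · intro y hy
      exact h y (interior_subset hy)
  have := hmono (Set.self_mem_Ici) hx hx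
  simp at this
  linarith

lemma aux_half (s : ℝ) (hs : 0 < s) :
    s * Real.sinh s ≤ 2 * (1 + s) * (Real.cosh s - 1) := by
  have hcs : Real.cosh s = 1 + 2 * Real.sinh (s/2) ^ 2 := by
    have h := Real.cosh_add (s/2) (s/2)
    rw [show s/2 + s/2 = s by ring] at h
    rw [h]
    linear_combination Real.cosh_sq_sub_sinh_sq (s/2)
  have hss : Real.sinh s = 2 * Real.sinh (s/2) * Real.cosh (s/2) := by
    have h := Real.sinh_add (s/2) (s/2)
    rw [show s/2 + s/2 = s by ring] at h
    rw [h]; ring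
  have hu : 0 < s / 2 := by linarith
  have hsu : s / 2 < Real.sinh (s/2) := Real.self_lt_sinh_iff.mpr hu
  have hcu : Real.cosh (s/2) = Real.sinh (s/2) + Real.exp (-(s/2)) := by
    have := Real.cosh_sub_sinh (s/2); linarith
  have he : Real.exp (-(s/2)) ≤ 1 := Real.exp_le_one_iff.mpr (by linarith)
  have he0 : 0 < Real.exp (-(s/2)) := Real.exp_pos _
  rw [hcs, hss, hcu]
  nlinarith [mul_pos hs (mul_pos hu hu), mul_pos hs hu, sq_nonneg (Real.sinh (s/2) - s/2),
    mul_le_mul_of_nonneg_left he (by positivity : (0:ℝ) ≤ 2 * s * Real.sinh (s/2)),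
    mul_pos hs (lt_trans hu hsu)]

lemma core (a b : ℝ) (ha : 0 < a) (hb : 0 < b) :
    ((a + b) ^ 2 * coth (a + b) - a ^ 2 * coth a - b ^ 2 * coth b) /
        (a * b * (a + b)) ≥ (1/2) / (1 + (a + b)) := by
  have hs : 0 < a + b := by linarith
  have hSa : 0 < Real.sinh a := Real.sinh_pos_iff.mpr ha
  have hSb : 0 < Real.sinh b := Real.sinh_pos_iff.mpr hb
  have hSs : 0 < Real.sinh (a + b) := Real.sinh_pos_iff.mpr hs
  have hCa : 1 ≤ Real.cosh a := Real.one_le_cosh a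
  have hCb : 1 ≤ Real.cosh b := Real.one_le_cosh b
  have hCs : 1 ≤ Real.cosh (a + b) := Real.one_le_cosh (a + b)
  set Sa := Real.sinh a with hSa'
  set Sb := Real.sinh b with hSb'
  set Ca := Real.cosh a with hCa'
  set Cb := Real.cosh b with hCb'
  -- key identity
  have key : ((a + b) ^ 2 * coth (a + b) - a ^ 2 * coth a - b ^ 2 * coth b)
      = (2*a*b*Sa*Sb*Real.cosh (a+b) - b^2*Sa^2 - a^2*Sb^2) / (Sa*Sb*Real.sinh (a+b)) := by
    rw [coth, coth, coth, Real.sinh_add, Real.cosh_add]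
    field_simp
    ring_nf
    linear_combination (-(a^2*Sa*Sb^3)) * Real.cosh_sq_sub_sinh_sq a +
      (-(b^2*Sa^3*Sb)) * Real.cosh_sq_sub_sinh_sq b
  rw [ge_iff_le, key, div_div]
  rw [div_le_div_iff₀ (by linarith) (by positivity)]
  -- main estimates
  have e1 : b * Sa ≤ Sb * (a * Ca) :=
    mul_le_mul (Real.self_lt_sinh_iff.mpr hb).le (sinh_le_mul_cosh ha.le) hSa.le hSb.le
  have e2 : a * Sb ≤ Sa * (b * Cb) :=
    mul_le_mul (Real.self_lt_sinh_iff.mpr ha).le (sinh_le_mul_cosh hb.le) hSb.le hSa.le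
  have h1 : b^2 * Sa^2 ≤ a*b*Ca*Sa*Sb := by nlinarith [mul_pos hb hSa]
  have h2 : a^2 * Sb^2 ≤ a*b*Cb*Sa*Sb := by nlinarith [mul_pos ha hSb]
  have h3 : Ca + Cb ≤ Real.cosh (a+b) + 1 := by
    rw [Real.cosh_add]
    nlinarith [mul_pos hSa hSb]
  have h4 := aux_half (a+b) hs
  have habs : 0 < a*b*Sa*Sb := by positivity
  have h5 : a*b*Sa*Sb*(Real.cosh (a+b) - 1) ≤
      2*a*b*Sa*Sb*Real.cosh (a+b) - b^2*Sa^2 - a^2*Sb^2 := by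
    nlinarith [mul_le_mul_of_nonneg_left h3 habs.le]
  rw [div_mul_eq_mul_div, le_div_iff₀ (by positivity : (0:ℝ) < Sa*Sb*Real.sinh (a+b))]
  nlinarith [mul_le_mul_of_nonneg_right h5 (by linarith : (0:ℝ) ≤ 1 + (a+b)),
    mul_le_mul_of_nonneg_left h4 (by positivity : (0:ℝ) ≤ a*b*Sa*Sb)]

lemma coth_neg' (x : ℝ) : coth (-x) = -coth x := by
  simp [coth, Real.sinh_neg, Real.cosh_neg, div_neg]

lemma max_rot (u v w : ℝ) : max (max u v) w = max (max w v) u := by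
  rw [max_assoc, max_comm (max w v) u, max_comm w v]

theorem coth_resonance_lower_bound :
    ∃ c : ℝ, 0 < c ∧ ∀ ξ₁ ξ₂ : ℝ, ξ₁ ≠ 0 → ξ₂ ≠ 0 → ξ₁ + ξ₂ ≠ 0 →
      ((ξ₁ + ξ₂) ^ 2 * coth (ξ₁ + ξ₂) - ξ₁ ^ 2 * coth ξ₁ - ξ₂ ^ 2 * coth ξ₂) /
          (ξ₁ * ξ₂ * (ξ₁ + ξ₂)) ≥
        c / (1 + max (max |ξ₁| |ξ₂|) |ξ₁ + ξ₂|) := by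
  refine ⟨1/2, by norm_num, ?_⟩
  have pos : ∀ p q : ℝ, 0 < p → 0 < q →
      ((p + q) ^ 2 * coth (p + q) - p ^ 2 * coth p - q ^ 2 * coth q) /
          (p * q * (p + q)) ≥ (1/2) / (1 + max (max |p| |q|) |p + q|) := by
    intro p q hp hq
    have hmax : max (max |p| |q|) |p + q| = p + q := by
      rw [abs_of_pos hp, abs_of_pos hq, abs_of_pos (by linarith : (0:ℝ) < p + q)]
      rw [max_eq_right (max_le (by linarith) (by linarith))]
    rw [hmax]
    exact core p q hp hq
  intro x y hx hy hxy
  have hxy' : ¬(-y + -x = 0) := fun hc => hxy (by linarith)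
  rcases hx.lt_or_gt with hx0 | hx0 <;> rcases hy.lt_or_gt with hy0 | hy0
  · -- x < 0, y < 0
    have h := pos (-x) (-y) (by linarith) (by linarith)
    calc (1/2) / (1 + max (max |x| |y|) |x + y|)
        = (1/2) / (1 + max (max |(-x)| |(-y)|) |(-x) + (-y)|) := by
          rw [show (-x) + (-y) = -(x+y) by ring, abs_neg, abs_neg, abs_neg]
      _ ≤ ((-x + -y) ^ 2 * coth (-x + -y) - (-x) ^ 2 * coth (-x) - (-y) ^ 2 * coth (-y)) /
          (-x * -y * (-x + -y)) := h
      _ = ((x + y) ^ 2 * coth (x + y) - x ^ 2 * coth x - y ^ 2 * coth y) /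
          (x * y * (x + y)) := by
          rw [show (-x) + (-y) = -(x+y) by ring, coth_neg', coth_neg', coth_neg',
            div_eq_div_iff (by simp [mul_eq_zero, hx, hy, hxy, hxy']) (by simp [mul_eq_zero, hx, hy, hxy, hxy'])]
          ring
  · -- x < 0, 0 < y
    rcases hxy.lt_or_gt with hs0 | hs0
    · -- x + y < 0 : use pair (-(x+y), y), sum -x
      have h := pos (-(x+y)) y (by linarith) hy0
      calc (1/2) / (1 + max (max |x| |y|) |x + y|)
          = (1/2) / (1 + max (max |(-(x+y))| |y|) |(-(x+y)) + y|) := by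
            rw [show (-(x+y)) + y = -x by ring, abs_neg, abs_neg]
            simp [max_comm, max_left_comm, max_assoc]
        _ ≤ ((-(x+y) + y) ^ 2 * coth (-(x+y) + y) - (-(x+y)) ^ 2 * coth (-(x+y)) -
              y ^ 2 * coth y) / (-(x+y) * y * (-(x+y) + y)) := h
        _ = ((x + y) ^ 2 * coth (x + y) - x ^ 2 * coth x - y ^ 2 * coth y) /
            (x * y * (x + y)) := by
            rw [show (-(x+y)) + y = -x by ring, coth_neg', coth_neg',
              div_eq_div_iff (by simp [mul_eq_zero, hx, hy, hxy, hxy']) (by simp [mul_eq_zero, hx, hy, hxy, hxy'])]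
            ring
    · -- 0 < x + y : use pair (x+y, -x), sum y
      have h := pos (x+y) (-x) hs0 (by linarith)
      calc (1/2) / (1 + max (max |x| |y|) |x + y|)
          = (1/2) / (1 + max (max |x+y| |(-x)|) |(x+y) + (-x)|) := by
            rw [show (x+y) + (-x) = y by ring, abs_neg]
            simp [max_comm, max_left_comm, max_assoc]
        _ ≤ (((x+y) + -x) ^ 2 * coth ((x+y) + -x) - (x+y) ^ 2 * coth (x+y) -
              (-x) ^ 2 * coth (-x)) / ((x+y) * -x * ((x+y) + -x)) := h
        _ = ((x + y) ^ 2 * coth (x + y) - x ^ 2 * coth x - y ^ 2 * coth y) /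
            (x * y * (x + y)) := by
            rw [show (x+y) + (-x) = y by ring, coth_neg',
              div_eq_div_iff (by simp [mul_eq_zero, hx, hy, hxy, hxy']) (by simp [mul_eq_zero, hx, hy, hxy, hxy'])]
            ring
  · -- 0 < x, y < 0
    rcases hxy.lt_or_gt with hs0 | hs0
    · -- x + y < 0 : use pair (-(x+y), x), sum -y
      have h := pos (-(x+y)) x (by linarith) hx0
      calc (1/2) / (1 + max (max |x| |y|) |x + y|)
          = (1/2) / (1 + max (max |(-(x+y))| |x|) |(-(x+y)) + x|) := by
            rw [show (-(x+y)) + x = -y by ring, abs_neg, abs_neg]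
            simp [max_comm, max_left_comm, max_assoc]
        _ ≤ ((-(x+y) + x) ^ 2 * coth (-(x+y) + x) - (-(x+y)) ^ 2 * coth (-(x+y)) -
              x ^ 2 * coth x) / (-(x+y) * x * (-(x+y) + x)) := h
        _ = ((x + y) ^ 2 * coth (x + y) - x ^ 2 * coth x - y ^ 2 * coth y) /
            (x * y * (x + y)) := by
            rw [show (-(x+y)) + x = -y by ring, coth_neg', coth_neg',
              div_eq_div_iff (by simp [mul_eq_zero, hx, hy, hxy, hxy']) (by simp [mul_eq_zero, hx, hy, hxy, hxy'])]
            ring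
    · -- 0 < x + y : use pair (x+y, -y), sum x
      have h := pos (x+y) (-y) hs0 (by linarith)
      calc (1/2) / (1 + max (max |x| |y|) |x + y|)
          = (1/2) / (1 + max (max |x+y| |(-y)|) |(x+y) + (-y)|) := by
            rw [show (x+y) + (-y) = x by ring, abs_neg]
            simp [max_comm, max_left_comm, max_assoc]
        _ ≤ (((x+y) + -y) ^ 2 * coth ((x+y) + -y) - (x+y) ^ 2 * coth (x+y) -
              (-y) ^ 2 * coth (-y)) / ((x+y) * -y * ((x+y) + -y)) := h
        _ = ((x + y) ^ 2 * coth (x + y) - x ^ 2 * coth x - y ^ 2 * coth y) /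
            (x * y * (x + y)) := by
            rw [show (x+y) + (-y) = x by ring, coth_neg',
              div_eq_div_iff (by simp [mul_eq_zero, hx, hy, hxy, hxy']) (by simp [mul_eq_zero, hx, hy, hxy, hxy'])]
            ring
  · exact pos x y hx0 hy0
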